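/- Let k ≥ 2 be an integer, γ₁,…,γ_k positive real numbers, and α₁ > α₂ > ⋯ > α_k real numbers. Let ℓ ≥ 3 be an integer, t₁ < ⋯ < t_ℓ distinct real numbers, and (u_n) a sequence of positive reals with u_n → +∞. Then for every (α,β) ∈ ℝ² with (α,β) ≠ (α₁, log γ₁), one has liminf_{n→∞} ∑_{i=1}^ℓ |f_{α,β}(log(u_n) + t_i)|² > 0; moreover if α ≠ α₁ then ∑_{i=1}^ℓ |f_{α,β}(log(u_n) + t_i)|² → +∞ as n → ∞. -/

import Mathlib

open Filter

/-- The function `f_{α,β}(x) = α·x + β − log(∑ γ_q exp(α_q x))`. -/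
noncomputable def f {k : ℕ} (γ αs : Fin k → ℝ) (a b : ℝ) (x : ℝ) : ℝ :=
  a * x + b - Real.log (∑ q, γ q * Real.exp (αs q * x))

theorem stmt_6 {k : ℕ} (hk : 2 ≤ k) (γ αs : Fin k → ℝ)
    (hγ : ∀ q, 0 < γ q) (hαs : StrictAnti αs)
    {ℓ : ℕ} (hℓ : 3 ≤ ℓ) (t : Fin ℓ → ℝ) (ht : StrictMono t)
    (u : ℕ → ℝ) (hu_pos : ∀ n, 0 < u n) (hu : Tendsto u atTop atTop)
    (a b : ℝ) (hab : (a, b) ≠ (αs ⟨0, by omega⟩, Real.log (γ ⟨0, by omega⟩))) :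
    (∃ c : ℝ, 0 < c ∧ ∀ᶠ n in atTop,
        c ≤ ∑ i, (f γ αs a b (Real.log (u n) + t i)) ^ 2) ∧
    (a ≠ αs ⟨0, by omega⟩ →
      Tendsto (fun n => ∑ i, (f γ αs a b (Real.log (u n) + t i)) ^ 2)
        atTop atTop) := by
  have hk0 : 0 < k := by omega
  set i0 : Fin k := ⟨0, by omega⟩ with hi0
  set R : ℝ → ℝ := fun x => ∑ q, (γ q / γ i0) * Real.exp ((αs q - αs i0) * x) with hRdef
  have hγ0 : (0:ℝ) < γ i0 := hγ i0
  have hRpos : ∀ x, 0 < R x := fun x =>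
    Finset.sum_pos (fun q _ => mul_pos (div_pos (hγ q) hγ0) (Real.exp_pos _))
      ⟨i0, Finset.mem_univ _⟩
  -- decomposition of f
  have hf : ∀ x, f γ αs a b x
      = (a - αs i0) * x + (b - Real.log (γ i0)) - Real.log (R x) := by
    intro x
    have hsum : ∑ q, γ q * Real.exp (αs q * x)
        = (γ i0 * Real.exp (αs i0 * x)) * R x := by
      rw [hRdef, Finset.mul_sum]
      refine Finset.sum_congr rfl fun q _ => ?_
      have h1 : αs i0 * x + (αs q - αs i0) * x = αs q * x := by ring
      rw [mul_mul_mul_comm, ← Real.exp_add, h1, mul_comm (γ i0),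
        div_mul_cancel₀ _ hγ0.ne']
    have hlog : Real.log (∑ q, γ q * Real.exp (αs q * x))
        = Real.log (γ i0) + αs i0 * x + Real.log (R x) := by
      rw [hsum, Real.log_mul (by positivity) (hRpos x).ne',
        Real.log_mul hγ0.ne' (Real.exp_pos _).ne', Real.log_exp]
    simp only [f, hlog]; ring
  -- R tends to 1 at +∞
  have hRlim : Tendsto R atTop (nhds 1) := by
    have h1 : Tendsto R atTop (nhds (∑ q : Fin k, if q = i0 then (1:ℝ) else 0)) := by
      refine tendsto_finset_sum _ fun q _ => ?_
      by_cases hq : q = i0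
      · subst hq
        simp only [if_pos rfl, sub_self, zero_mul, Real.exp_zero, mul_one,
          div_self hγ0.ne']
        exact tendsto_const_nhds
      · simp only [if_neg hq]
        have hqlt : i0 < q := by
          have hq0 : q.1 ≠ 0 := fun h => hq (Fin.ext h)
          have hi0v : i0.1 = 0 := rfl
          simp only [Fin.lt_def]
          omega
        have hneg : αs q - αs i0 < 0 := sub_neg.mpr (hαs hqlt)
        have hx : Tendsto (fun x => (αs q - αs i0) * x) atTop atBot :=
          (tendsto_const_mul_atBot_of_neg hneg).mpr tendsto_id
        have := (Real.tendsto_exp_atBot.comp hx).const_mul (γ q / γ i0)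
        simpa using this
    simpa [Finset.sum_ite_eq' Finset.univ i0, Finset.mem_univ] using h1
  have hlogR : Tendsto (fun x => Real.log (R x)) atTop (nhds 0) := by
    have := (Real.continuousAt_log one_ne_zero).tendsto.comp hRlim
    simpa [Function.comp_def] using this
  -- the sequences log(u n) + t i tend to +∞
  have hx : ∀ i : Fin ℓ, Tendsto (fun n => Real.log (u n) + t i) atTop atTop :=
    fun i => tendsto_atTop_add_const_right _ _ (Real.tendsto_log_atTop.comp hu)
  have hlogRx : ∀ i : Fin ℓ,
      Tendsto (fun n => Real.log (R (Real.log (u n) + t i))) atTop (nhds 0) :=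
    fun i => hlogR.comp (hx i)
  by_cases ha : a = αs i0
  · -- then b ≠ log γ i0
    have hb : b ≠ Real.log (γ i0) := by
      intro hb; exact hab (by rw [ha, hb])
    set c0 : ℝ := b - Real.log (γ i0) with hc0
    have hc0ne : c0 ≠ 0 := sub_ne_zero.mpr hb
    have hterm : ∀ i : Fin ℓ,
        Tendsto (fun n => (f γ αs a b (Real.log (u n) + t i))^2) atTop (nhds (c0^2)) := by
      intro i
      have h1 : Tendsto (fun n => f γ αs a b (Real.log (u n) + t i)) atTop (nhds c0) := by
        have := (tendsto_const_nhds (x := c0) (f := atTop (α := ℕ))).sub (hlogRx i)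
        simp only [sub_zero] at this
        refine this.congr fun n => ?_
        rw [hf, ha, sub_self, zero_mul, zero_add]
      simpa using h1.pow 2
    have hsumlim : Tendsto (fun n => ∑ i, (f γ αs a b (Real.log (u n) + t i))^2)
        atTop (nhds (ℓ * c0^2)) := by
      have := tendsto_finset_sum (Finset.univ : Finset (Fin ℓ)) (fun i _ => hterm i)
      simpa [Finset.sum_const, nsmul_eq_mul, Finset.card_univ] using this
    refine ⟨⟨ℓ * c0^2 / 2, by positivity, ?_⟩, fun h => absurd ha h⟩
    have hlt : ℓ * c0^2 / 2 < ℓ * c0^2 :=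
      half_lt_self (by positivity)
    exact hsumlim.eventually_const_le hlt
  · -- a ≠ α₀ : the sum tends to +∞
    have hT : Tendsto (fun n => ∑ i, (f γ αs a b (Real.log (u n) + t i))^2)
        atTop atTop := by
      set i1 : Fin ℓ := ⟨0, by omega⟩
      have hf2 : Tendsto (fun n => (f γ αs a b (Real.log (u n) + t i1))^2) atTop atTop := by
        have hrepr : ∀ n, f γ αs a b (Real.log (u n) + t i1)
            = (a - αs i0) * (Real.log (u n) + t i1)
              + ((b - Real.log (γ i0)) - Real.log (R (Real.log (u n) + t i1))) := by
          intro n; rw [hf]; ring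
        have hns : Tendsto (fun n => (b - Real.log (γ i0))
            - Real.log (R (Real.log (u n) + t i1))) atTop
            (nhds (b - Real.log (γ i0))) := by
          have := (tendsto_const_nhds (x := b - Real.log (γ i0))
            (f := atTop (α := ℕ))).sub (hlogRx i1)
          simpa using this
        rcases lt_or_gt_of_ne (sub_ne_zero.mpr ha) with hneg | hpos
        · have hlin : Tendsto (fun n => (a - αs i0) * (Real.log (u n) + t i1)) atTop atBot :=
            (tendsto_const_mul_atBot_of_neg hneg).mpr (hx i1)
          have hfb : Tendsto (fun n => f γ αs a b (Real.log (u n) + t i1)) atTop atBot := by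
            refine (hlin.atBot_add hns).congr fun n => (hrepr n).symm
          have := hfb.atBot_mul_atBot₀ hfb
          refine this.congr fun n => by ring
        · have hlin : Tendsto (fun n => (a - αs i0) * (Real.log (u n) + t i1)) atTop atTop :=
            (tendsto_const_mul_atTop_of_pos hpos).mpr (hx i1)
          have hfb : Tendsto (fun n => f γ αs a b (Real.log (u n) + t i1)) atTop atTop := by
            refine (hlin.atTop_add hns).congr fun n => (hrepr n).symm
          have := hfb.atTop_mul_atTop₀ hfb
          refine this.congr fun n => by ring
      refine tendsto_atTop_mono (fun n => ?_) hf2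
      exact Finset.single_le_sum
        (f := fun i => (f γ αs a b (Real.log (u n) + t i))^2)
        (fun i _ => sq_nonneg _) (Finset.mem_univ i1)
    refine ⟨⟨1, one_pos, hT.eventually_ge_atTop 1⟩, fun _ => hT⟩
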